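/- arXiv:2001.01654 — 2 statements merged into one kernel-verified Lean document; each statement's English description precedes it below -/
import Mathlib

section
/- The function f₃(z) = z + z³/3 is injective on the closed unit disk, and its derivative f₃'(z) = 1 + z² vanishes exactly at z = ±i on the closed unit disk, with f₃(±i) = ±(2/3)i. -/
open Metric Complex

/-!
`f₃ z - f₃ w = (z - w) (3 + z² + z w + w²) / 3`. On the closed unit disk each of `z², z w, w²` has
real part `≥ -1`, so the second factor vanishes only if all three equal `-1`; then `z² = z w` with
`z ≠ 0`, so again `z = w`.
-/

theorem hasDerivAt_add_pow_three_div_three {𝕜 : Type*} [NontriviallyNormedField 𝕜] [CharZero 𝕜]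
    (x : 𝕜) : HasDerivAt (fun x : 𝕜 => x + x ^ 3 / 3) (1 + x ^ 2) x :=
  ((hasDerivAt_id' x).add ((hasDerivAt_pow 3 x).div_const 3)).congr_deriv (by field_simp; ring)

theorem Complex.eq_neg_one_of_norm_le_one_of_re_eq_neg_one {u : ℂ} (hu : ‖u‖ ≤ 1)
    (hre : u.re = -1) : u = -1 := by
  have him : u.im = 0 :=
    abs_re_eq_norm.1 <| le_antisymm (abs_re_le_norm u) (by simpa [hre] using hu)
  exact Complex.ext (by simp [hre]) (by simp [him])

theorem Complex.eq_of_sq_add_mul_add_sq_eq_neg_three {z w : ℂ} (hz : ‖z‖ ≤ 1) (hw : ‖w‖ ≤ 1)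
    (h : z ^ 2 + z * w + w ^ 2 = -3) : z = w := by
  have norm_mul_le_one {u v : ℂ} (hu : ‖u‖ ≤ 1) (hv : ‖v‖ ≤ 1) : ‖u * v‖ ≤ 1 := by
    simpa [norm_mul] using mul_le_one₀ hu (norm_nonneg v) hv
  have hzz := norm_mul_le_one hz hz
  have hzw := norm_mul_le_one hz hw
  have hww := norm_mul_le_one hw hw
  have hre : (z * z).re + (z * w).re + (w * w).re = -3 := by
    simpa [sq] using congrArg re h
  have lower {u : ℂ} (hu : ‖u‖ ≤ 1) : -1 ≤ u.re := by
    linarith [(abs_le.1 (abs_re_le_norm u)).1]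
  have h_zz : z * z = -1 := eq_neg_one_of_norm_le_one_of_re_eq_neg_one hzz
    (by linarith [lower hzz, lower hzw, lower hww])
  have h_zw : z * w = -1 := eq_neg_one_of_norm_le_one_of_re_eq_neg_one hzw
    (by linarith [lower hzz, lower hzw, lower hww])
  have hz0 : z ≠ 0 := by rintro rfl; simp at h_zz
  exact mul_left_cancel₀ hz0 (h_zz.trans h_zw.symm)

theorem Complex.injOn_add_pow_three_div_three :
    Set.InjOn (fun z : ℂ => z + z ^ 3 / 3) (closedBall 0 1) := by
  intro z hz w hw heq
  rw [mem_closedBall_zero_iff] at hz hw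
  have factor : (z - w) * (z ^ 2 + z * w + w ^ 2 + 3) = 0 := by
    linear_combination 3 * heq
  rcases mul_eq_zero.1 factor with hzw | hsum
  · exact sub_eq_zero.1 hzw
  · exact eq_of_sq_add_mul_add_sq_eq_neg_three hz hw (by linear_combination hsum)

theorem Complex.one_add_sq_eq_zero_iff {z : ℂ} : 1 + z ^ 2 = 0 ↔ z = I ∨ z = -I := by
  rw [← sq_eq_sq_iff_eq_or_eq_neg, I_sq]
  constructor <;> intro h <;> linear_combination h

/-- The map `f₃(z) = z + z³/3` is injective on the closed unit disk; its derivative is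
`f₃'(z) = 1 + z²`, which vanishes on the closed unit disk exactly at `z = ±i`, and
`f₃(±i) = ±(2/3)i`. -/
theorem stmt8 :
    Set.InjOn (fun z : ℂ => z + z ^ 3 / 3) (closedBall (0 : ℂ) 1) ∧
      (∀ z : ℂ, deriv (fun z : ℂ => z + z ^ 3 / 3) z = 1 + z ^ 2) ∧
      (∀ z ∈ closedBall (0 : ℂ) 1,
        (deriv (fun z : ℂ => z + z ^ 3 / 3) z = 0 ↔ z = I ∨ z = -I)) ∧
      (fun z : ℂ => z + z ^ 3 / 3) I = (2 / 3) * I ∧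
      (fun z : ℂ => z + z ^ 3 / 3) (-I) = -((2 / 3) * I) := by
  have hderiv (z : ℂ) : deriv (fun z : ℂ => z + z ^ 3 / 3) z = 1 + z ^ 2 :=
    (hasDerivAt_add_pow_three_div_three z).deriv
  refine ⟨injOn_add_pow_three_div_three, hderiv, fun z _ => ?_, ?_, ?_⟩
  · rw [hderiv, one_add_sq_eq_zero_iff]
  · linear_combination (1 / 3 : ℂ) * I_pow_three
  · linear_combination (-1 / 3 : ℂ) * I_pow_three
end

section
/- Let f be continuous on the closed unit disk and holomorphic on the open unit disk with f(0) = q. Then the function F(z,t) = tq + (f(tz) − q)/t (with F(z,0) := f'(0)·z) extends to a jointly continuous function on {|z| ≤ 1} × [−1,1]. -/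
open Metric Set

/-!
Write `F(z,t) = t q + z · g(t z)`, where `g = dslope f 0` is the difference quotient
`(f w - f 0) / w`, extended by `f'(0)` at `w = 0`. Since `f` is continuous on the closed disk
and differentiable at `0`, `g` is continuous on the closed disk, and `(z,t) ↦ t z` maps
`{|z| ≤ 1} × [-1,1]` into it; so `F` is continuous.
-/

theorem ofReal_mul_mem_closedBall_zero {r t : ℝ} {z : ℂ} (hz : z ∈ closedBall (0 : ℂ) r)
    (ht : t ∈ Icc (-1 : ℝ) 1) : (t : ℂ) * z ∈ closedBall (0 : ℂ) r := by
  rw [mem_closedBall_zero_iff] at hz ⊢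
  calc ‖(t : ℂ) * z‖ = |t| * ‖z‖ := by rw [norm_mul, Complex.norm_real, Real.norm_eq_abs]
    _ ≤ 1 * r := mul_le_mul (abs_le.mpr ht) hz (norm_nonneg z) zero_le_one
    _ = r := one_mul r

theorem mul_dslope_zero_mul {𝕜 : Type*} [NontriviallyNormedField 𝕜] (f : 𝕜 → 𝕜) {t : 𝕜}
    (ht : t ≠ 0) (z : 𝕜) : z * dslope f 0 (t * z) = (f (t * z) - f 0) / t := by
  rcases eq_or_ne z 0 with rfl | hz
  · simp
  · rw [dslope_of_ne f (mul_ne_zero ht hz), slope_def_field]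
    field_simp
    ring

theorem continuousOn_dslope_zero_closedBall {f : ℂ → ℂ} {r : ℝ} (hr : 0 < r)
    (hfc : ContinuousOn f (closedBall 0 r)) (hfd : DifferentiableOn ℂ f (ball 0 r)) :
    ContinuousOn (dslope f 0) (closedBall 0 r) :=
  (continuousOn_dslope (closedBall_mem_nhds 0 hr)).2
    ⟨hfc, hfd.differentiableAt (ball_mem_nhds 0 hr)⟩

/-- If `f` is continuous on the closed unit disk, holomorphic on the open unit disk,
with `f(0) = q`, then `F(z,t) = tq + (f(tz) − q)/t` (with `F(z,0) := f'(0)·z`) extends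
to a jointly continuous function on `{|z| ≤ 1} × [−1,1]`. -/
theorem stmt12 (f : ℂ → ℂ) (q : ℂ)
    (hfc : ContinuousOn f (closedBall (0 : ℂ) 1))
    (hfd : DifferentiableOn ℂ f (ball (0 : ℂ) 1))
    (hq : f 0 = q) :
    ∃ F : ℂ × ℝ → ℂ,
      ContinuousOn F (closedBall (0 : ℂ) 1 ×ˢ Icc (-1 : ℝ) 1) ∧
      (∀ z ∈ closedBall (0 : ℂ) 1, ∀ t ∈ Icc (-1 : ℝ) 1, t ≠ 0 →
        F (z, t) = (t : ℂ) * q + (f ((t : ℂ) * z) - q) / t) ∧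
      (∀ z ∈ closedBall (0 : ℂ) 1, F (z, 0) = deriv f 0 * z) := by
  subst hq
  refine ⟨fun p => (p.2 : ℂ) * f 0 + p.1 * dslope f 0 ((p.2 : ℂ) * p.1), ?_, ?_, ?_⟩
  · have hmul : ContinuousOn (fun p : ℂ × ℝ => (p.2 : ℂ) * p.1)
        (closedBall (0 : ℂ) 1 ×ˢ Icc (-1 : ℝ) 1) := by fun_prop
    have hg := (continuousOn_dslope_zero_closedBall one_pos hfc hfd).comp hmul
      fun p hp => ofReal_mul_mem_closedBall_zero hp.1 hp.2
    exact (Continuous.continuousOn (by fun_prop)).add (continuousOn_fst.mul hg)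
  · intro z _ t _ ht
    simp only [mul_dslope_zero_mul f (Complex.ofReal_ne_zero.mpr ht)]
  · intro z _
    simp [dslope_same, mul_comm]
end
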